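/- Let K, L ⊆ ℝⁿ be compact sets and U ⊆ ℝⁿ a linear subspace. Then conv(K) ∩ conv(L) ∩ U = ∅ if and only if for all subsets K' ⊆ K and L' ⊆ L with |K'| + |L'| ≤ 2(n+1) - dim(U), one has conv(K') ∩ conv(L') ∩ U = ∅. -/
import Mathlib

open Set Submodule Module

namespace Stmt6Aux

variable {n : ℕ}

local notation "E" n => EuclideanSpace ℝ (Fin n)

/-- The target space. -/
abbrev W (n : ℕ) (U : Submodule ℝ (EuclideanSpace ℝ (Fin n))) :=
  ((EuclideanSpace ℝ (Fin n)) ⧸ U) × (EuclideanSpace ℝ (Fin n)) × ℝ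

noncomputable def cMap (U : Submodule ℝ (EuclideanSpace ℝ (Fin n))) :
    (EuclideanSpace ℝ (Fin n)) →ᵃ[ℝ] W n U :=
  { toFun := fun k => (U.mkQ k, k, 1)
    linear := U.mkQ.prod (LinearMap.id.prod 0)
    map_vadd' := fun p v => by
      simp [Prod.ext_iff, add_comm] }

noncomputable def dMap (U : Submodule ℝ (EuclideanSpace ℝ (Fin n))) :
    (EuclideanSpace ℝ (Fin n)) →ᵃ[ℝ] W n U :=
  { toFun := fun l => (0, -l, -1)
    linear := (0 : _ →ₗ[ℝ] _).prod ((-LinearMap.id).prod 0)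
    map_vadd' := fun p v => by
      simp [Prod.ext_iff, add_comm] }

@[simp] lemma cMap_apply (U : Submodule ℝ (EuclideanSpace ℝ (Fin n))) (k) :
    cMap U k = (U.mkQ k, k, 1) := rfl

@[simp] lemma dMap_apply (U : Submodule ℝ (EuclideanSpace ℝ (Fin n))) (l) :
    dMap U l = (0, -l, -1) := rfl

lemma key (U : Submodule ℝ (EuclideanSpace ℝ (Fin n))) (A B : Set (EuclideanSpace ℝ (Fin n))) :
    (0 : W n U) ∈ convexHull ℝ (cMap U '' A ∪ dMap U '' B) ↔
      (convexHull ℝ A ∩ convexHull ℝ B ∩ (U : Set _)).Nonempty := by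
  constructor
  · intro h0
    -- A and B are nonempty
    rcases A.eq_empty_or_nonempty with rfl | hA
    · rw [Set.image_empty, Set.empty_union, ← AffineMap.image_convexHull] at h0
      obtain ⟨x, -, hx⟩ := h0
      exact absurd (congrArg (fun w => w.2.2) hx) (by simp)
    rcases B.eq_empty_or_nonempty with rfl | hB
    · rw [Set.image_empty, Set.union_empty, ← AffineMap.image_convexHull] at h0
      obtain ⟨x, -, hx⟩ := h0
      exact absurd (congrArg (fun w => w.2.2) hx) (by simp)
    rw [convexHull_union (hA.image _) (hB.image _), mem_convexJoin] at h0
    obtain ⟨a, ha, b, hb, p, q, hp, hq, hpq, hab⟩ := h0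
    rw [← AffineMap.image_convexHull] at ha hb
    obtain ⟨x₁, hx₁, rfl⟩ := ha
    obtain ⟨x₂, hx₂, rfl⟩ := hb
    -- third coordinate: p - q = 0
    have h3 : p * 1 + q * (-1) = 0 := congrArg (fun w => w.2.2) hab
    have hpq2 : p = q := by linarith [h3]
    have hp2 : p = 1/2 := by linarith
    -- second coordinate
    have h2 : p • x₁ + q • (-x₂) = 0 := congrArg (fun w => w.2.1) hab
    have hx12 : x₁ = x₂ := by
      have : p • (x₁ - x₂) = 0 := by
        rw [smul_sub, sub_eq_zero]
        have := h2
        rw [smul_neg, add_neg_eq_zero, hpq2] at this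
        rw [hpq2]; exact this
      have := smul_eq_zero.1 this
      rcases this with h | h
      · exact absurd h (by rw [hp2]; norm_num)
      · exact sub_eq_zero.1 h
    -- first coordinate
    have h1 : p • U.mkQ x₁ + q • (0 : _ ⧸ U) = 0 := congrArg (fun w => w.1) hab
    have hxU : x₁ ∈ U := by
      rw [smul_zero, add_zero, smul_eq_zero] at h1
      rcases h1 with h | h
      · exact absurd h (by rw [hp2]; norm_num)
      · exact (Submodule.Quotient.mk_eq_zero U).1 h
    exact ⟨x₁, ⟨⟨hx₁, hx12 ▸ hx₂⟩, hxU⟩⟩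
  · rintro ⟨x, ⟨hxA, hxB⟩, hxU⟩
    have hc : cMap U x ∈ convexHull ℝ (cMap U '' A ∪ dMap U '' B) := by
      refine convexHull_mono Set.subset_union_left ?_
      rw [← AffineMap.image_convexHull]
      exact Set.mem_image_of_mem _ hxA
    have hd : dMap U x ∈ convexHull ℝ (cMap U '' A ∪ dMap U '' B) := by
      refine convexHull_mono Set.subset_union_right ?_
      rw [← AffineMap.image_convexHull]
      exact Set.mem_image_of_mem _ hxB
    have := (convex_convexHull ℝ (cMap U '' A ∪ dMap U '' B)) hc hd
      (by norm_num : (0:ℝ) ≤ 1/2) (by norm_num : (0:ℝ) ≤ 1/2) (by norm_num)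
    convert this using 1
    have : U.mkQ x = 0 := (Submodule.Quotient.mk_eq_zero U).2 hxU
    simp [Prod.ext_iff, this, smul_smul]

end Stmt6Aux



theorem stmt_6 {n : ℕ} (K L : Set (EuclideanSpace ℝ (Fin n)))
    (hK : IsCompact K) (hL : IsCompact L) (U : Submodule ℝ (EuclideanSpace ℝ (Fin n))) :
    convexHull ℝ K ∩ convexHull ℝ L ∩ (U : Set (EuclideanSpace ℝ (Fin n))) = ∅ ↔
      ∀ (K' L' : Finset (EuclideanSpace ℝ (Fin n))), ↑K' ⊆ K → ↑L' ⊆ L →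
        K'.card + L'.card ≤ 2 * (n + 1) - Module.finrank ℝ U →
        convexHull ℝ (K' : Set (EuclideanSpace ℝ (Fin n))) ∩
          convexHull ℝ (L' : Set (EuclideanSpace ℝ (Fin n))) ∩
          (U : Set (EuclideanSpace ℝ (Fin n))) = ∅ := by
  constructor
  · intro h K' L' hK' hL' _
    refine Set.eq_empty_of_subset_empty ?_
    rw [← h]
    exact Set.inter_subset_inter
      (Set.inter_subset_inter (convexHull_mono hK') (convexHull_mono hL')) le_rfl
  · intro h
    by_contra hne
    rw [← Ne, ← Set.nonempty_iff_ne_empty] at hne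
    have h0 : (0 : Stmt6Aux.W n U) ∈
        convexHull ℝ (Stmt6Aux.cMap U '' K ∪ Stmt6Aux.dMap U '' L) :=
      (Stmt6Aux.key U K L).2 hne
    rw [convexHull_eq_union] at h0
    simp only [Set.mem_iUnion, exists_prop] at h0
    obtain ⟨t, hts, hai, h0t⟩ := h0
    -- cardinality bound
    have hcardt : t.card ≤ 2 * (n + 1) - Module.finrank ℝ U := by
      have h1 := hai.card_le_finrank_succ
      rw [Fintype.card_coe] at h1
      have h12 : t.card ≤ Module.finrank ℝ (Stmt6Aux.W n U) + 1 :=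
        h1.trans (Nat.add_le_add_right (Submodule.finrank_le _) 1)
      have hq : Module.finrank ℝ ((EuclideanSpace ℝ (Fin n)) ⧸ U) + Module.finrank ℝ U = n := by
        rw [Submodule.finrank_quotient_add_finrank, finrank_euclideanSpace_fin]
      have h3 : Module.finrank ℝ (Stmt6Aux.W n U) =
          Module.finrank ℝ ((EuclideanSpace ℝ (Fin n)) ⧸ U) + (n + 1) := by
        rw [Module.finrank_prod, Module.finrank_prod, finrank_euclideanSpace_fin,
          Module.finrank_self]
      omega
    classical
    set K' : Finset (EuclideanSpace ℝ (Fin n)) :=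
      (t.filter (fun w => w.2.2 = (1:ℝ))).image (fun w => w.2.1) with hK'def
    set L' : Finset (EuclideanSpace ℝ (Fin n)) :=
      (t.filter (fun w => w.2.2 = (-1:ℝ))).image (fun w => -w.2.1) with hL'def
    have hK'K : ↑K' ⊆ K := by
      intro y hy
      simp only [hK'def, Finset.coe_image, Set.mem_image, Finset.mem_coe,
        Finset.mem_filter] at hy
      obtain ⟨w, ⟨hwt, hw3⟩, rfl⟩ := hy
      rcases hts hwt with ⟨k, hk, rfl⟩ | ⟨l, hl, rfl⟩
      · simpa using hk
      · simp only [Stmt6Aux.dMap_apply] at hw3; norm_num at hw3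
    have hL'L : ↑L' ⊆ L := by
      intro y hy
      simp only [hL'def, Finset.coe_image, Set.mem_image, Finset.mem_coe,
        Finset.mem_filter] at hy
      obtain ⟨w, ⟨hwt, hw3⟩, rfl⟩ := hy
      rcases hts hwt with ⟨k, hk, rfl⟩ | ⟨l, hl, rfl⟩
      · simp only [Stmt6Aux.cMap_apply] at hw3; norm_num at hw3
      · simpa using hl
    have hcards : K'.card + L'.card ≤ t.card := by
      have h1 : K'.card ≤ (t.filter (fun w => w.2.2 = (1:ℝ))).card := Finset.card_image_le
      have h2 : L'.card ≤ (t.filter (fun w => w.2.2 = (-1:ℝ))).card := Finset.card_image_le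
      have h3 : (t.filter (fun w => w.2.2 = (-1:ℝ))).card ≤
          (t.filter (fun w => ¬ w.2.2 = (1:ℝ))).card := by
        apply Finset.card_le_card
        intro w hw
        rw [Finset.mem_filter] at hw ⊢
        exact ⟨hw.1, by rw [hw.2]; norm_num⟩
      have h4 := Finset.card_filter_add_card_filter_not
        (s := t) (p := fun w => w.2.2 = (1:ℝ))
      omega
    have htsub : (↑t : Set (Stmt6Aux.W n U)) ⊆
        Stmt6Aux.cMap U '' ↑K' ∪ Stmt6Aux.dMap U '' ↑L' := by
      intro w hwt
      rcases hts hwt with ⟨k, hk, rfl⟩ | ⟨l, hl, rfl⟩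
      · left
        refine ⟨k, ?_, rfl⟩
        refine Finset.mem_coe.2 (Finset.mem_image.2 ⟨Stmt6Aux.cMap U k, ?_, rfl⟩)
        exact Finset.mem_filter.2 ⟨hwt, rfl⟩
      · right
        refine ⟨l, ?_, rfl⟩
        refine Finset.mem_coe.2 (Finset.mem_image.2 ⟨Stmt6Aux.dMap U l, ?_, ?_⟩)
        · exact Finset.mem_filter.2 ⟨hwt, rfl⟩
        · exact neg_neg l
    have h0' : (0 : Stmt6Aux.W n U) ∈
        convexHull ℝ (Stmt6Aux.cMap U '' ↑K' ∪ Stmt6Aux.dMap U '' ↑L') :=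
      convexHull_mono htsub h0t
    have hnon := (Stmt6Aux.key U ↑K' ↑L').1 h0'
    rw [h K' L' hK'K hL'L (le_trans hcards hcardt)] at hnon
    exact Set.not_nonempty_empty hnon
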